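/- arXiv:2604.09460 — 3 statements merged into one kernel-verified Lean document; each statement's English description precedes it below -/
import Mathlib

section
/- Optimal penal code for PCE (necessity): if x[0] ∈ PCEP, then choosing for each i ∈ N a path x[i] minimizing U_i over PCEP, the family {x[k]}_{k∈{0}∪N} satisfies: for all k ∈ {0}∪N, all periods τ ≥ 1, all nonempty coalitions C ⊆ N, and all ζ^C_τ ∈ Z^C, there exists j ∈ C with U_j(x[k]) ≥ U_j(x[k]; ζ^C_τ; x[j]). -/
open Set

section Setup

variable {N : Type*} [Fintype N] [DecidableEq N] {Z : N → Type*}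

/-- A stage-game action profile. -/
abbrev Profile (Z : N → Type*) := ∀ i, Z i

/-- An infinite path of action profiles. -/
abbrev RPath (Z : N → Type*) := ℕ → Profile Z

/-- The profile played in period `τ` when coalition `C` deviates to `ζ` (off `C`, players follow `x τ`). -/
def devProfile (x : RPath Z) (C : Finset N) (τ : ℕ) (ζ : Profile Z) : Profile Z :=
  fun i => if i ∈ C then ζ i else x τ i

/-- The spliced path `(x; ζ^C_τ; y)`: follow `x` before period `τ`, play the deviation profile at `τ`,
and follow `y` afterwards.  Periods are indexed from `0`. -/
def splice (x : RPath Z) (C : Finset N) (τ : ℕ) (ζ : Profile Z) (y : RPath Z) : RPath Z :=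
  fun t => if t < τ then x t else if t = τ then devProfile x C τ ζ else y (t - τ - 1)

/-- Discounted payoff `U_i(x) = (1-δ) ∑ δ^t u_i(x_t)`. -/
noncomputable def disc (u : N → Profile Z → ℝ) (δ : ℝ) (i : N) (x : RPath Z) : ℝ :=
  (1 - δ) * ∑' t : ℕ, δ ^ t * u i (x t)

/-- The coalitional enforceability operator `Ψ`. -/
def Psi (u : N → Profile Z → ℝ) (δ : ℝ) (Y : Set (RPath Z)) : Set (RPath Z) :=
  {x | ∀ C : Finset N, C.Nonempty → ∀ τ : ℕ, ∀ ζ : Profile Z,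
    ∃ p : N → RPath Z, (∀ i, p i ∈ Y) ∧
      ∃ i ∈ C, disc u δ i x ≥ disc u δ i (splice x C τ ζ (p i))}

/-- A history (position) is a finite list of past action profiles. -/
abbrev Hist (Z : N → Type*) := List (Profile Z)

/-- The history reached after `n` periods of following plan `f` from history `h`. -/
def planHist (f : Hist Z → Profile Z) (h : Hist Z) : ℕ → Hist Z
  | 0 => h
  | n + 1 => planHist f h n ++ [f (planHist f h n)]

/-- The continuation path prescribed by plan `f` after history `h`. -/
def planPath (f : Hist Z → Profile Z) (h : Hist Z) : RPath Z :=
  fun n => f (planHist f h n)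

/-- The position induced from `G` when coalition `C` deviates from path `x` in period `τ` via `ζ`. -/
def devHistory (G : Hist Z) (x : RPath Z) (C : Finset N) (τ : ℕ) (ζ : Profile Z) : Hist Z :=
  G ++ (List.ofFn fun t : Fin τ => x t) ++ [devProfile x C τ ζ]

/-- A Perfect Coalitional Equilibrium: after every history, every one-shot coalitional deviation
leaves some member of the deviating coalition no better off, given the plan's continuation. -/
def IsPCE (u : N → Profile Z → ℝ) (δ : ℝ) (f : Hist Z → Profile Z) : Prop :=
  ∀ h : Hist Z, ∀ C : Finset N, C.Nonempty → ∀ τ : ℕ, ∀ ζ : Profile Z,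
    ∃ i ∈ C, disc u δ i (planPath f h) ≥
      disc u δ i (splice (planPath f h) C τ ζ (planPath f (devHistory h (planPath f h) C τ ζ)))

/-- The set of Perfect Coalitional Equilibrium paths. -/
def PCEP (u : N → Profile Z → ℝ) (δ : ℝ) : Set (RPath Z) :=
  {x | ∃ f : Hist Z → Profile Z, IsPCE u δ f ∧ planPath f [] = x}

/-- Payoff at position `G`: `u_i(G)(x) = a_i(G) + δ^{|G|} U_i(x)`. -/
noncomputable def posPayoff (u : N → Profile Z → ℝ) (δ : ℝ) (i : N) (G : Hist Z)
    (x : RPath Z) : ℝ :=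
  (1 - δ) * (∑ t : Fin G.length, δ ^ (t : ℕ) * u i (G.get t)) + δ ^ G.length * disc u δ i x

/-- The conservative dominion of position `G` relative to the standard of behavior `σ`. -/
def CDOM (u : N → Profile Z → ℝ) (δ : ℝ) (σ : Hist Z → Set (RPath Z)) (G : Hist Z) :
    Set (RPath Z) :=
  {x | ∃ C : Finset N, C.Nonempty ∧ ∃ τ : ℕ, ∃ ζ : Profile Z,
    (σ (devHistory G x C τ ζ)).Nonempty ∧
    ∀ y ∈ σ (devHistory G x C τ ζ), ∀ i ∈ C,
      posPayoff u δ i (devHistory G x C τ ζ) y > posPayoff u δ i G x}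

/-- A standard of behavior is nondiscriminating if it assigns the same set to every position. -/
def Nondiscriminating (σ : Hist Z → Set (RPath Z)) : Prop := ∀ G H, σ G = σ H

/-- Conservative internal stability. -/
def ConsInternallyStable (u : N → Profile Z → ℝ) (δ : ℝ) (σ : Hist Z → Set (RPath Z)) : Prop :=
  ∀ G, σ G ∩ CDOM u δ σ G = ∅

/-- Conservative external stability. -/
def ConsExternallyStable (u : N → Profile Z → ℝ) (δ : ℝ) (σ : Hist Z → Set (RPath Z)) : Prop :=
  ∀ G, (σ G)ᶜ ⊆ CDOM u δ σ G

end Setup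

/-!
Each `x[k]` is a PCE path, so the plan generating it deters every one-shot coalitional deviation
by the plan's own continuation, which is again a PCE path because the continuation of a PCE after
any history is a PCE. Replacing that continuation by the `U_j`-minimal PCE path `x[j]` can only
lower `j`'s continuation payoff, and the payoff of a spliced path is monotone in its continuation,
so the deviation stays deterred.
-/

section SubgamePerfection

variable {N : Type*} {Z : N → Type*}

lemma planHist_append (f : Hist Z → Profile Z) (H h : Hist Z) (n : ℕ) :
    planHist f (H ++ h) n = H ++ planHist (fun h' => f (H ++ h')) h n := by
  induction n with
  | zero => rfl
  | succ n ih => simp [planHist, ih]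

lemma planPath_append (f : Hist Z → Profile Z) (H h : Hist Z) :
    planPath f (H ++ h) = planPath (fun h' => f (H ++ h')) h := by
  funext n
  simp [planPath, planHist_append]

variable [DecidableEq N]

lemma devHistory_append (H h : Hist Z) (x : RPath Z) (C : Finset N) (τ : ℕ) (ζ : Profile Z) :
    devHistory (H ++ h) x C τ ζ = H ++ devHistory h x C τ ζ := by
  simp [devHistory]

lemma IsPCE.append {u : N → Profile Z → ℝ} {δ : ℝ} {f : Hist Z → Profile Z}
    (hf : IsPCE u δ f) (H : Hist Z) : IsPCE u δ (fun h => f (H ++ h)) := by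
  intro h C hC τ ζ
  rw [← planPath_append, ← planPath_append, ← devHistory_append]
  exact hf (H ++ h) C hC τ ζ

lemma IsPCE.planPath_mem_PCEP {u : N → Profile Z → ℝ} {δ : ℝ} {f : Hist Z → Profile Z}
    (hf : IsPCE u δ f) (H : Hist Z) : planPath f H ∈ PCEP u δ :=
  ⟨_, hf.append H, by rw [← planPath_append, List.append_nil]⟩

end SubgamePerfection

lemma summable_pow_mul_comp_of_compactSpace {X : Type*} [TopologicalSpace X] [CompactSpace X]
    {v : X → ℝ} (hv : Continuous v) {δ : ℝ} (hδ0 : 0 ≤ δ) (hδ1 : δ < 1) (s : ℕ → X) :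
    Summable fun t => δ ^ t * v (s t) := by
  obtain ⟨M, hM⟩ := isCompact_univ.exists_bound_of_continuousOn hv.continuousOn
  refine ((summable_geometric_of_lt_one hδ0 hδ1).mul_right M).of_norm_bounded fun t => ?_
  rw [norm_mul, norm_pow, Real.norm_of_nonneg hδ0]
  exact mul_le_mul_of_nonneg_left (hM _ (mem_univ _)) (pow_nonneg hδ0 t)

section Splice

variable {N : Type*} [DecidableEq N] {Z : N → Type*}

lemma splice_congr_of_le (x : RPath Z) (C : Finset N) (ζ : Profile Z) (y y' : RPath Z)
    {t τ : ℕ} (ht : t ≤ τ) : splice x C τ ζ y t = splice x C τ ζ y' t := by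
  rcases ht.lt_or_eq with ht | rfl <;> simp [splice, *]

lemma splice_add_succ (x : RPath Z) (C : Finset N) (τ : ℕ) (ζ : Profile Z) (y : RPath Z)
    (n : ℕ) : splice x C τ ζ y (n + (τ + 1)) = y n := by
  simp only [splice, show ¬n + (τ + 1) < τ by omega, show n + (τ + 1) ≠ τ by omega,
    show n + (τ + 1) - τ - 1 = n by omega, if_false]

variable {u : N → Profile Z → ℝ} {δ : ℝ} {i : N}

lemma disc_splice (hsum : ∀ s : RPath Z, Summable fun t => δ ^ t * u i (s t))
    (x : RPath Z) (C : Finset N) (τ : ℕ) (ζ : Profile Z) (y : RPath Z) :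
    disc u δ i (splice x C τ ζ y) =
      (1 - δ) * ∑ t ∈ Finset.range (τ + 1), δ ^ t * u i (splice x C τ ζ y t)
        + δ ^ (τ + 1) * disc u δ i y := by
  have htail (n : ℕ) : δ ^ (n + (τ + 1)) * u i (splice x C τ ζ y (n + (τ + 1)))
      = δ ^ (τ + 1) * (δ ^ n * u i (y n)) := by
    rw [splice_add_succ]
    ring
  rw [disc, ← (hsum _).sum_add_tsum_nat_add (τ + 1), tsum_congr htail, tsum_mul_left, disc]
  ring

lemma disc_splice_le_disc_splice (hsum : ∀ s : RPath Z, Summable fun t => δ ^ t * u i (s t))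
    (hδ : 0 ≤ δ) (x : RPath Z) (C : Finset N) (τ : ℕ) (ζ : Profile Z) {y y' : RPath Z}
    (h : disc u δ i y ≤ disc u δ i y') :
    disc u δ i (splice x C τ ζ y) ≤ disc u δ i (splice x C τ ζ y') := by
  have hhead : ∑ t ∈ Finset.range (τ + 1), δ ^ t * u i (splice x C τ ζ y t)
      = ∑ t ∈ Finset.range (τ + 1), δ ^ t * u i (splice x C τ ζ y' t) :=
    Finset.sum_congr rfl fun t ht => by
      rw [splice_congr_of_le x C ζ y y' (Nat.lt_succ_iff.mp (Finset.mem_range.mp ht))]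
  rw [disc_splice hsum, disc_splice hsum, hhead]
  gcongr

end Splice

theorem optimal_penal_code_necessity_general {N : Type*} [DecidableEq N] {Z : N → Type*}
    [∀ i, MetricSpace (Z i)] [∀ i, CompactSpace (Z i)]
    (u : N → Profile Z → ℝ) (δ : ℝ)
    (hu : ∀ i, Continuous (u i)) (hδ0 : 0 < δ) (hδ1 : δ < 1)
    (x0 : RPath Z) (hx0 : x0 ∈ PCEP u δ) (xp : N → RPath Z)
    (hxp : ∀ i, xp i ∈ PCEP u δ ∧ ∀ y ∈ PCEP u δ, disc u δ i (xp i) ≤ disc u δ i y) :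
    ∀ k : Option N, ∀ τ : ℕ, ∀ C : Finset N, C.Nonempty → ∀ ζ : Profile Z,
      ∃ j ∈ C, disc u δ j (k.elim x0 xp) ≥
        disc u δ j (splice (k.elim x0 xp) C τ ζ (xp j)) := by
  intro k τ C hC ζ
  obtain ⟨f, hf, hfx⟩ : k.elim x0 xp ∈ PCEP u δ := by
    cases k with
    | none => exact hx0
    | some i => exact (hxp i).1
  obtain ⟨j, hj, hdeter⟩ := hf [] C hC τ ζ
  rw [hfx] at hdeter
  have hpunish := (hxp j).2 _ (hf.planPath_mem_PCEP (devHistory [] (k.elim x0 xp) C τ ζ))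
  have hsum (s : RPath Z) := summable_pow_mul_comp_of_compactSpace (hu j) hδ0.le hδ1 s
  exact ⟨j, hj, (disc_splice_le_disc_splice hsum hδ0.le _ C τ ζ hpunish).trans hdeter⟩

theorem optimal_penal_code_necessity {N : Type*} [Fintype N] [DecidableEq N] {Z : N → Type*}
    [∀ i, MetricSpace (Z i)] [∀ i, CompactSpace (Z i)] [∀ i, Nonempty (Z i)]
    (u : N → Profile Z → ℝ) (δ : ℝ)
    (hu : ∀ i, Continuous (u i)) (hδ0 : 0 < δ) (hδ1 : δ < 1)
    (x0 : RPath Z) (hx0 : x0 ∈ PCEP u δ) (xp : N → RPath Z)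
    (hxp : ∀ i, xp i ∈ PCEP u δ ∧ ∀ y ∈ PCEP u δ, disc u δ i (xp i) ≤ disc u δ i y) :
    ∀ k : Option N, ∀ τ : ℕ, ∀ C : Finset N, C.Nonempty → ∀ ζ : Profile Z,
      ∃ j ∈ C, disc u δ j (k.elim x0 xp) ≥
        disc u δ j (splice (k.elim x0 xp) C τ ζ (xp j)) :=
  optimal_penal_code_necessity_general u δ hu hδ0 hδ1 x0 hx0 xp hxp
end

section
/- Optimal penal code for PCE (sufficiency): if there exists a family of paths {x[i]}_{i∈N} ⊆ X such that for all k ∈ {0}∪N, all periods τ ≥ 1, all nonempty coalitions C ⊆ N, and all ζ^C_τ ∈ Z^C, there exists j ∈ C with U_j(x[k]) ≥ U_j(x[k]; ζ^C_τ; x[j]), then x[0] ∈ PCEP. -/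
open Set

/-!
The plan is an automaton whose state `(k, t)` records the path `x[k]` being followed and the
period `t` reached on it: it advances along `x[k]` as long as play conforms, and as soon as some
profile `z` is observed instead of the prescribed one it restarts on the punishment path `x[j]` of
a player `j` among those whose action in `z` differs from the prescription. Since off the deviating coalition a deviation profile agrees with the prescription,
these detected deviators lie inside every coalition that could have produced `z`, and `j` is chosen
by the hypothesis applied to the detected coalition. One-shot deviations at a later position of
`x[k]` are handled by cancelling the common prefix of discounted payoffs, which requires bounded
stage payoffs.
-/

section Discounting

variable {N : Type*} {Z : N → Type*} {u : N → Profile Z → ℝ} {δ M : ℝ} {i : N}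

lemma summable_discounted (hM : ∀ z, |u i z| ≤ M) (hδ0 : 0 ≤ δ) (hδ1 : δ < 1) (x : RPath Z) :
    Summable fun t => δ ^ t * u i (x t) := by
  refine .of_norm_bounded ((summable_geometric_of_lt_one hδ0 hδ1).mul_right M) fun t => ?_
  rw [norm_mul, norm_pow, Real.norm_of_nonneg hδ0, Real.norm_eq_abs]
  exact mul_le_mul_of_nonneg_left (hM _) (pow_nonneg hδ0 t)

lemma disc_eq_sum_range_add_disc_shift (hM : ∀ z, |u i z| ≤ M) (hδ0 : 0 ≤ δ) (hδ1 : δ < 1)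
    (x : RPath Z) (t : ℕ) :
    disc u δ i x = (1 - δ) * ∑ s ∈ Finset.range t, δ ^ s * u i (x s)
      + δ ^ t * disc u δ i (fun n => x (t + n)) := by
  have htail : ∑' s, δ ^ (s + t) * u i (x (s + t)) = δ ^ t * ∑' s, δ ^ s * u i (x (t + s)) := by
    rw [← tsum_mul_left]
    congr 1 with s
    rw [pow_add, add_comm s t]
    ring
  unfold disc
  rw [← (summable_discounted hM hδ0 hδ1 x).sum_add_tsum_nat_add t, htail]
  ring

lemma disc_shift_le_of_eqOn_of_le (hM : ∀ z, |u i z| ≤ M) (hδ0 : 0 < δ) (hδ1 : δ < 1)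
    {x y : RPath Z} {t : ℕ} (hxy : ∀ s < t, x s = y s) (h : disc u δ i y ≤ disc u δ i x) :
    disc u δ i (fun n => y (t + n)) ≤ disc u δ i (fun n => x (t + n)) := by
  have hprefix : ∑ s ∈ Finset.range t, δ ^ s * u i (y s) = ∑ s ∈ Finset.range t, δ ^ s * u i (x s) :=
    Finset.sum_congr rfl fun s hs => by rw [hxy s (Finset.mem_range.mp hs)]
  rw [disc_eq_sum_range_add_disc_shift hM hδ0.le hδ1 x t,
    disc_eq_sum_range_add_disc_shift hM hδ0.le hδ1 y t, hprefix] at h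
  exact le_of_mul_le_mul_left (by linarith) (pow_pos hδ0 t)

end Discounting

section Deviators

variable {N : Type*} [Fintype N] {Z : N → Type*}

open Classical in
noncomputable def deviators (a z : Profile Z) : Finset N := Finset.univ.filter fun i => z i ≠ a i

lemma mem_deviators {a z : Profile Z} {i : N} : i ∈ deviators a z ↔ z i ≠ a i := by
  simp [deviators]

lemma deviators_nonempty {a z : Profile Z} (h : z ≠ a) : (deviators a z).Nonempty := by
  by_contra hempty
  exact h (funext fun i => by_contra fun hi => hempty ⟨i, mem_deviators.mpr hi⟩)

end Deviators

section Splice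

variable {N : Type*} [DecidableEq N] {Z : N → Type*}

lemma deviators_devProfile_subset [Fintype N] (x : RPath Z) (C : Finset N) (τ : ℕ)
    (ζ : Profile Z) : deviators (x τ) (devProfile x C τ ζ) ⊆ C := fun i hi => by
  by_contra hiC
  exact mem_deviators.mp hi (if_neg hiC)

lemma devProfile_deviators [Fintype N] (x : RPath Z) (τ : ℕ) (z : Profile Z) :
    devProfile x (deviators (x τ) z) τ z = z := by
  funext i
  by_cases hi : i ∈ deviators (x τ) z
  · exact if_pos hi
  · rw [devProfile, if_neg hi]
    exact (not_not.mp (mt mem_deviators.mpr hi)).symm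

lemma splice_apply_of_lt (x y : RPath Z) (C : Finset N) (ζ : Profile Z) {τ s : ℕ} (hs : s < τ) :
    splice x C τ ζ y s = x s :=
  if_pos hs

lemma splice_congr_devProfile {x y : RPath Z} {C C' : Finset N} {τ : ℕ} {ζ ζ' : Profile Z}
    (h : devProfile x C τ ζ = devProfile x C' τ ζ') : splice x C τ ζ y = splice x C' τ ζ' y := by
  funext s
  simp only [splice, h]

lemma splice_shift (x y : RPath Z) (C : Finset N) (t τ : ℕ) (ζ : Profile Z) :
    (fun n => splice x C (t + τ) ζ y (t + n)) = splice (fun n => x (t + n)) C τ ζ y := by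
  funext s
  simp only [splice, add_lt_add_iff_left, add_right_inj,
    show t + s - (t + τ) - 1 = s - τ - 1 by omega]
  rfl

lemma splice_eq_self {x : RPath Z} {C : Finset N} {τ : ℕ} {ζ : Profile Z}
    (h : devProfile x C τ ζ = x τ) : splice x C τ ζ (fun n => x (τ + 1 + n)) = x := by
  funext s
  simp only [splice]
  split_ifs with hlt heq
  · rfl
  · rw [heq, h]
  · congr 1
    omega

end Splice

lemma planHist_eq_append_ofFn {N : Type*} {Z : N → Type*} (f : Hist Z → Profile Z) (G : Hist Z)
    (n : ℕ) : planHist f G n = G ++ List.ofFn fun s : Fin n => planPath f G s := by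
  induction n with
  | zero => simp [planHist]
  | succ n ih =>
    rw [planHist, ih, List.ofFn_succ_last]
    simp [planPath, ih]

lemma devHistory_planPath {N : Type*} [DecidableEq N] {Z : N → Type*} (f : Hist Z → Profile Z)
    (G : Hist Z) (C : Finset N) (τ : ℕ) (ζ : Profile Z) :
    devHistory G (planPath f G) C τ ζ = planHist f G τ ++ [devProfile (planPath f G) C τ ζ] := by
  rw [devHistory, planHist_eq_append_ofFn]

namespace PenalCode

variable {N : Type*} {Z : N → Type*} {S : Type*} (x : S → RPath Z) (next : S → ℕ → Profile Z → S)

open Classical in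
/-- In state `(s, t)` the plan prescribes `x s t`; any other observed profile `z` sends it to the
start of the path `x (next s t z)`. -/
noncomputable def step (q : S × ℕ) (z : Profile Z) : S × ℕ :=
  if z = x q.1 q.2 then (q.1, q.2 + 1) else (next q.1 q.2 z, 0)

noncomputable def state (s₀ : S) (h : Hist Z) : S × ℕ := h.foldl (step x next) (s₀, 0)

noncomputable def plan (s₀ : S) (h : Hist Z) : Profile Z :=
  x (state x next s₀ h).1 (state x next s₀ h).2

variable {x next} {s₀ : S}

lemma state_append_singleton (h : Hist Z) (z : Profile Z) :
    state x next s₀ (h ++ [z]) = step x next (state x next s₀ h) z := by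
  rw [state, List.foldl_append]
  rfl

lemma state_planHist (G : Hist Z) (n : ℕ) :
    state x next s₀ (planHist (plan x next s₀) G n)
      = ((state x next s₀ G).1, (state x next s₀ G).2 + n) := by
  induction n with
  | zero => rfl
  | succ n ih =>
    rw [planHist, state_append_singleton, plan, ih, step, if_pos rfl, add_assoc]

lemma planPath_plan (G : Hist Z) :
    planPath (plan x next s₀) G = fun n => x (state x next s₀ G).1 ((state x next s₀ G).2 + n) := by
  funext n
  rw [planPath, plan, state_planHist]

lemma planPath_plan_nil : planPath (plan x next s₀) [] = x s₀ := by
  rw [planPath_plan]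
  simp [state]

lemma state_devHistory [DecidableEq N] (G : Hist Z) (C : Finset N) (τ : ℕ) (ζ : Profile Z) :
    state x next s₀ (devHistory G (planPath (plan x next s₀) G) C τ ζ)
      = step x next ((state x next s₀ G).1, (state x next s₀ G).2 + τ)
          (devProfile (planPath (plan x next s₀) G) C τ ζ) := by
  rw [devHistory_planPath, state_append_singleton, state_planHist]

variable [DecidableEq N] [Fintype N] {u : N → Profile Z → ℝ} {δ : ℝ}

theorem isPCE_plan (hu : ∀ i, ∃ M, ∀ z, |u i z| ≤ M) (hδ0 : 0 < δ) (hδ1 : δ < 1)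
    (hnext : ∀ s t z, z ≠ x s t → ∃ j ∈ deviators (x s t) z,
      disc u δ j (splice (x s) (deviators (x s t) z) t z (x (next s t z))) ≤ disc u δ j (x s))
    (s₀ : S) : IsPCE u δ (plan x next s₀) := by
  intro G C hC τ ζ
  have hdev := state_devHistory (x := x) (next := next) (s₀ := s₀) G C τ ζ
  rw [planPath_plan] at hdev ⊢
  rw [planPath_plan, hdev]
  rcases state x next s₀ G with ⟨s, t⟩
  dsimp only
  set z := devProfile (fun n => x s (t + n)) C τ ζ
  by_cases hconf : z = x s (t + τ)
  · obtain ⟨i, hi⟩ := hC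
    refine ⟨i, hi, le_of_eq ?_⟩
    rw [step, if_pos hconf, show (fun n => x s (t + τ + 1 + n)) = fun n => x s (t + (τ + 1 + n)) by
      simp only [add_assoc], splice_eq_self hconf]
  · obtain ⟨j, hj, hpun⟩ := hnext s (t + τ) z hconf
    refine ⟨j, deviators_devProfile_subset _ C τ ζ hj, ?_⟩
    have hsplice : ∀ y, splice (x s) (deviators (x s (t + τ)) z) (t + τ) z y
        = splice (x s) C (t + τ) ζ y := fun y =>
      splice_congr_devProfile (devProfile_deviators (x s) (t + τ) z)
    rw [step, if_neg hconf]
    simp only [zero_add]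
    rw [← splice_shift]
    rw [hsplice] at hpun
    obtain ⟨M, hM⟩ := hu j
    exact disc_shift_le_of_eqOn_of_le hM hδ0 hδ1
      (fun r hr => (splice_apply_of_lt _ _ _ _ (by omega)).symm) hpun

end PenalCode

theorem optimal_penal_code_sufficiency_general {N : Type*} [Fintype N] [DecidableEq N] {Z : N → Type*}
    [∀ i, MetricSpace (Z i)] [∀ i, CompactSpace (Z i)]
    (u : N → Profile Z → ℝ) (δ : ℝ)
    (hu : ∀ i, Continuous (u i)) (hδ0 : 0 < δ) (hδ1 : δ < 1)
    (x0 : RPath Z) (xp : N → RPath Z)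
    (h : ∀ k : Option N, ∀ τ : ℕ, ∀ C : Finset N, C.Nonempty → ∀ ζ : Profile Z,
      ∃ j ∈ C, disc u δ j (k.elim x0 xp) ≥
        disc u δ j (splice (k.elim x0 xp) C τ ζ (xp j))) :
    x0 ∈ PCEP u δ := by
  set x : Option N → RPath Z := fun k => k.elim x0 xp
  have hbdd : ∀ i, ∃ M, ∀ z, |u i z| ≤ M := fun i => by
    obtain ⟨M, hM⟩ := isCompact_univ.exists_bound_of_continuousOn (hu i).continuousOn
    exact ⟨M, fun z => hM z (mem_univ z)⟩
  have hpun : ∀ k t z, ∃ k' : Option N, z ≠ x k t → ∃ j ∈ deviators (x k t) z,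
      disc u δ j (splice (x k) (deviators (x k t) z) t z (x k')) ≤ disc u δ j (x k) := by
    intro k t z
    by_cases hz : z = x k t
    · exact ⟨k, fun hne => absurd hz hne⟩
    · obtain ⟨j, hj, hdet⟩ := h k t _ (deviators_nonempty hz) z
      exact ⟨some j, fun _ => ⟨j, hj, hdet⟩⟩
  choose next hnext using hpun
  exact ⟨PenalCode.plan x next none, PenalCode.isPCE_plan hbdd hδ0 hδ1 hnext none,
    PenalCode.planPath_plan_nil⟩

theorem optimal_penal_code_sufficiency {N : Type*} [Fintype N] [DecidableEq N] {Z : N → Type*}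
    [∀ i, MetricSpace (Z i)] [∀ i, CompactSpace (Z i)] [∀ i, Nonempty (Z i)]
    (u : N → Profile Z → ℝ) (δ : ℝ)
    (hu : ∀ i, Continuous (u i)) (hδ0 : 0 < δ) (hδ1 : δ < 1)
    (x0 : RPath Z) (xp : N → RPath Z)
    (h : ∀ k : Option N, ∀ τ : ℕ, ∀ C : Finset N, C.Nonempty → ∀ ζ : Profile Z,
      ∃ j ∈ C, disc u δ j (k.elim x0 xp) ≥
        disc u δ j (splice (k.elim x0 xp) C τ ζ (xp j))) :
    x0 ∈ PCEP u δ :=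
  optimal_penal_code_sufficiency_general u δ hu hδ0 hδ1 x0 xp h
end

section
/- Closure preserves conservative internal stability: if σ is a nondiscriminating conservatively internally stable standard of behavior for the coalitional repeated game situation (γ^C, Γ), then the standard of behavior σ̃ defined by σ̃(G) = closure of σ(G) is also nondiscriminating and conservatively internally stable; moreover if σ(G⁰) ≠ ∅ then σ̃(G⁰) is nonempty and compact. -/
open Set

/-! Passing to the closure can only shrink the conservative dominion: a path dominated relative to
`closure S` is dominated relative to `S`. For a nondiscriminating standard the set `K` that the
coalition faces after deviating does not depend on the position reached, and when `K` is compact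
the paths dominated through a fixed deviation `(C, τ, ζ)` form an open set by the tube lemma,
payoffs being jointly continuous in the deviated path and the continuation. The dominion relative
to `closure S` is thus an open set missing `S`, hence missing `closure S`. -/

theorem IsCompact.isOpen_setOf_forall_forall_lt {X Y ι α : Type*} [TopologicalSpace X]
    [TopologicalSpace Y] [TopologicalSpace α] [LinearOrder α] [OrderClosedTopology α]
    {K : Set Y} (hK : IsCompact K) (s : Finset ι) {f g : ι → X × Y → α}
    (hf : ∀ i, Continuous (f i)) (hg : ∀ i, Continuous (g i)) :
    IsOpen {x | ∀ y ∈ K, ∀ i ∈ s, f i (x, y) < g i (x, y)} :=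
  isOpen_iff_mem_nhds.2 fun _ hx => hK.eventually_forall_of_forall_eventually fun y hy =>
    (Filter.eventually_all_finset s).2 fun i hi =>
      (hf i).continuousAt.eventually_lt (hg i).continuousAt (hx y hy i hi)

section Payoffs

variable {N : Type*} {Z : N → Type*}

noncomputable def histSum (v : Profile Z → ℝ) (δ : ℝ) (L : Hist Z) : ℝ :=
  ∑ t : Fin L.length, δ ^ (t : ℕ) * v (L.get t)

lemma histSum_nil (v : Profile Z → ℝ) (δ : ℝ) : histSum v δ ([] : Hist Z) = 0 := by
  simp [histSum]

lemma histSum_cons (v : Profile Z → ℝ) (δ : ℝ) (a : Profile Z) (L : Hist Z) :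
    histSum v δ (a :: L) = v a + δ * histSum v δ L := by
  simp [histSum, Fin.sum_univ_succ, pow_succ', mul_assoc, Finset.mul_sum]

lemma histSum_append (v : Profile Z → ℝ) (δ : ℝ) (A B : Hist Z) :
    histSum v δ (A ++ B) = histSum v δ A + δ ^ A.length * histSum v δ B := by
  induction A with
  | nil => simp [histSum_nil]
  | cons a A ih =>
    rw [List.cons_append, histSum_cons, histSum_cons, ih, List.length_cons]
    ring

lemma histSum_ofFn (v : Profile Z → ℝ) (δ : ℝ) (τ : ℕ) (x : RPath Z) :
    histSum v δ (List.ofFn fun t : Fin τ => x t) = ∑ t : Fin τ, δ ^ (t : ℕ) * v (x t) := by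
  induction τ generalizing x with
  | zero => simp [histSum_nil]
  | succ n ih =>
    rw [List.ofFn_succ, histSum_cons, Fin.sum_univ_succ]
    simp only [Fin.val_succ]
    rw [ih fun t => x (t + 1)]
    simp [pow_succ', mul_assoc, Finset.mul_sum]

lemma posPayoff_devHistory [DecidableEq N] (u : N → Profile Z → ℝ) (δ : ℝ) (i : N) (G : Hist Z)
    (x : RPath Z) (C : Finset N) (τ : ℕ) (ζ : Profile Z) (y : RPath Z) :
    posPayoff u δ i (devHistory G x C τ ζ) y =
      (1 - δ) * (histSum (u i) δ G + δ ^ G.length * ((∑ t : Fin τ, δ ^ (t : ℕ) * u i (x t))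
          + δ ^ τ * u i (devProfile x C τ ζ)))
      + δ ^ (G.length + τ + 1) * disc u δ i y := by
  have hlen : (devHistory G x C τ ζ).length = G.length + τ + 1 := by
    simp [devHistory]; omega
  change (1 - δ) * histSum (u i) δ _ + _ = _
  rw [hlen, devHistory, histSum_append, histSum_append, histSum_ofFn, histSum_cons,
    histSum_nil, List.length_append, List.length_ofFn]
  ring

end Payoffs

section Continuity

variable {N : Type*} {Z : N → Type*} [∀ i, TopologicalSpace (Z i)]

@[fun_prop]
lemma continuous_devProfile [DecidableEq N] (C : Finset N) (τ : ℕ) (ζ : Profile Z) :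
    Continuous fun x : RPath Z => devProfile x C τ ζ := by
  refine continuous_pi fun j => ?_
  by_cases hj : j ∈ C
  · simpa [devProfile, hj] using continuous_const
  · simpa [devProfile, hj] using continuous_apply_apply τ j

variable [∀ i, CompactSpace (Z i)] {u : N → Profile Z → ℝ} {δ : ℝ}

lemma continuous_disc (hu : ∀ i, Continuous (u i)) (hδ0 : 0 ≤ δ) (hδ1 : δ < 1) (i : N) :
    Continuous (disc u δ i) := by
  obtain ⟨M, hM⟩ := (isCompact_range (hu i).abs).bddAbove
  refine continuous_const.mul (continuous_tsum (u := fun t => δ ^ t * M)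
    (fun t => continuous_const.mul ((hu i).comp (continuous_apply t)))
    ((summable_geometric_of_lt_one hδ0 hδ1).mul_right M) fun t x => ?_)
  rw [norm_mul, norm_pow, Real.norm_of_nonneg hδ0, Real.norm_eq_abs]
  exact mul_le_mul_of_nonneg_left (hM ⟨x t, rfl⟩) (pow_nonneg hδ0 t)

lemma continuous_posPayoff (hu : ∀ i, Continuous (u i)) (hδ0 : 0 ≤ δ) (hδ1 : δ < 1)
    (i : N) (G : Hist Z) : Continuous (posPayoff u δ i G) :=
  continuous_const.add (continuous_const.mul (continuous_disc hu hδ0 hδ1 i))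

lemma continuous_posPayoff_devHistory [DecidableEq N] (hu : ∀ i, Continuous (u i)) (hδ0 : 0 ≤ δ)
    (hδ1 : δ < 1) (i : N) (G : Hist Z) (C : Finset N) (τ : ℕ) (ζ : Profile Z) :
    Continuous fun p : RPath Z × RPath Z => posPayoff u δ i (devHistory G p.1 C τ ζ) p.2 := by
  simp only [posPayoff_devHistory]
  have hui := hu i
  have hy := continuous_disc hu hδ0 hδ1 i
  fun_prop

end Continuity

section Stability

variable {N : Type*} [DecidableEq N] {Z : N → Type*} {u : N → Profile Z → ℝ} {δ : ℝ}

lemma CDOM_closure_subset [∀ i, TopologicalSpace (Z i)] (σ : Hist Z → Set (RPath Z))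
    (G : Hist Z) : CDOM u δ (fun H => closure (σ H)) G ⊆ CDOM u δ σ G := by
  rintro x ⟨C, hC, τ, ζ, hne, hdom⟩
  exact ⟨C, hC, τ, ζ, closure_nonempty_iff.1 hne, fun y hy => hdom y (subset_closure hy)⟩

variable [∀ i, TopologicalSpace (Z i)] [∀ i, CompactSpace (Z i)]

lemma isOpen_CDOM (hu : ∀ i, Continuous (u i)) (hδ0 : 0 ≤ δ) (hδ1 : δ < 1)
    {σ : Hist Z → Set (RPath Z)} (hnd : Nondiscriminating σ) {G : Hist Z}
    (hK : IsCompact (σ G)) : IsOpen (CDOM u δ σ G) := by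
  refine isOpen_iff_mem_nhds.2 ?_
  rintro x ⟨C, hC, τ, ζ, hne, hdom⟩
  rw [hnd _ G] at hne hdom
  have hopen : IsOpen {x' | ∀ y ∈ σ G, ∀ i ∈ C,
      posPayoff u δ i G x' < posPayoff u δ i (devHistory G x' C τ ζ) y} :=
    hK.isOpen_setOf_forall_forall_lt C
      (fun i => (continuous_posPayoff hu hδ0 hδ1 i G).comp continuous_fst)
      (fun i => continuous_posPayoff_devHistory hu hδ0 hδ1 i G C τ ζ)
  filter_upwards [hopen.mem_nhds hdom] with x' hx'
  exact ⟨C, hC, τ, ζ, hnd G _ ▸ hne, fun y hy => hx' y (hnd _ G ▸ hy)⟩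

theorem ConsInternallyStable.closure_of_nondiscriminating (hu : ∀ i, Continuous (u i))
    (hδ0 : 0 ≤ δ) (hδ1 : δ < 1)
    {σ : Hist Z → Set (RPath Z)} (hnd : Nondiscriminating σ) (his : ConsInternallyStable u δ σ) :
    ConsInternallyStable u δ (fun G => closure (σ G)) := by
  intro G
  have hopen : IsOpen (CDOM u δ (fun H => closure (σ H)) G) :=
    isOpen_CDOM hu hδ0 hδ1 (fun G H => congrArg closure (hnd G H))
      isClosed_closure.isCompact
  have hdisj : Disjoint (σ G) (CDOM u δ (fun H => closure (σ H)) G) :=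
    (Set.disjoint_iff_inter_eq_empty.2 (his G)).mono_right (CDOM_closure_subset σ G)
  exact Set.disjoint_iff_inter_eq_empty.1 (hdisj.closure_left hopen)

end Stability

theorem closure_internally_stable_general {N : Type*} [DecidableEq N] {Z : N → Type*}
    [∀ i, MetricSpace (Z i)] [∀ i, CompactSpace (Z i)]
    (u : N → Profile Z → ℝ) (δ : ℝ)
    (hu : ∀ i, Continuous (u i)) (hδ0 : 0 < δ) (hδ1 : δ < 1)
    (σ : Hist Z → Set (RPath Z)) (hnd : Nondiscriminating σ)
    (his : ConsInternallyStable u δ σ) :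
    Nondiscriminating (fun G => closure (σ G)) ∧
    ConsInternallyStable u δ (fun G => closure (σ G)) ∧
    ((σ ([] : Hist Z)).Nonempty →
      (closure (σ ([] : Hist Z))).Nonempty ∧ IsCompact (closure (σ ([] : Hist Z)))) :=
  ⟨fun G H => congrArg closure (hnd G H), his.closure_of_nondiscriminating hu hδ0.le hδ1 hnd,
    fun hne => ⟨hne.closure, isClosed_closure.isCompact⟩⟩

theorem closure_internally_stable {N : Type*} [Fintype N] [DecidableEq N] {Z : N → Type*}
    [∀ i, MetricSpace (Z i)] [∀ i, CompactSpace (Z i)] [∀ i, Nonempty (Z i)]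
    (u : N → Profile Z → ℝ) (δ : ℝ)
    (hu : ∀ i, Continuous (u i)) (hδ0 : 0 < δ) (hδ1 : δ < 1)
    (σ : Hist Z → Set (RPath Z)) (hnd : Nondiscriminating σ)
    (his : ConsInternallyStable u δ σ) :
    Nondiscriminating (fun G => closure (σ G)) ∧
    ConsInternallyStable u δ (fun G => closure (σ G)) ∧
    ((σ ([] : Hist Z)).Nonempty →
      (closure (σ ([] : Hist Z))).Nonempty ∧ IsCompact (closure (σ ([] : Hist Z)))) :=
  closure_internally_stable_general u δ hu hδ0 hδ1 σ hnd his
end
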